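/- Let n be a nonnegative integer, z1, z2 ∈ H, and s ∈ ℂ with Re(s) > (n+1)/2. Write a_m(w; z) = (2^{1+m−2w} π Γ(2w−m−1) / (i^m Γ(w) Γ(w−m))) (Im z)^{1+m−2w} for the constant Fourier coefficient of S_m(z, 0, w). Then ∑_{c=1}^∞ φ(c) c^{2n−4s} · a_0(2s−n; z2) · a_{2n}(2s; z1) = ((−1)^n π² Γ(4s−2n−1)² / (4^{4s−2n−1} Γ(2s−2n) Γ(2s−n)² Γ(2s))) · (ζ(4s−2n−1)/ζ(4s−2n)) · (Im(z1) Im(z2))^{1+2n−4s}, and moreover for n = 1 the right-hand side, as a function of s, extends holomorphically to an open neighborhood of s = 1. -/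
import Mathlib


open Complex Filter Topology

noncomputable section

/-- The constant Fourier coefficient `a_m(w; z)` of `S_m(z, 0, w)`:
`a_m(w; z) = (2^{1+m−2w} π Γ(2w−m−1) / (i^m Γ(w) Γ(w−m))) (Im z)^{1+m−2w}`. -/
def aCoeff (m : ℕ) (w z : ℂ) : ℂ :=
  (2 : ℂ) ^ (1 + (m : ℂ) - 2 * w) * (Real.pi : ℂ) * Complex.Gamma (2 * w - (m : ℂ) - 1) /
    (Complex.I ^ m * Complex.Gamma w * Complex.Gamma (w - (m : ℂ))) *
    (z.im : ℂ) ^ (1 + (m : ℂ) - 2 * w)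

/-- The closed form of the constant term `∑_{c>0} A⁰(c)` of the Fourier expansion. -/
def rhsConstantTerm (n : ℕ) (z1 z2 s : ℂ) : ℂ :=
  (-1 : ℂ) ^ n * (Real.pi : ℂ) ^ 2 * Complex.Gamma (4 * s - 2 * (n : ℂ) - 1) ^ 2 /
      ((4 : ℂ) ^ (4 * s - 2 * (n : ℂ) - 1) * Complex.Gamma (2 * s - 2 * (n : ℂ)) *
        Complex.Gamma (2 * s - (n : ℂ)) ^ 2 * Complex.Gamma (2 * s)) *
    (riemannZeta (4 * s - 2 * (n : ℂ) - 1) / riemannZeta (4 * s - 2 * (n : ℂ))) *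
    ((z1.im * z2.im : ℝ) : ℂ) ^ (1 + 2 * (n : ℂ) - 4 * s)

open LSeries in
open scoped LSeries.notation in
/-- The Dirichlet series of the totient function: `∑ φ(c)/c^w = ζ(w-1)/ζ(w)` for `Re w > 2`. -/
lemma LSeries_totient_eq {w : ℂ} (hw : 2 < w.re) :
    LSeries (fun n : ℕ ↦ (Nat.totient n : ℂ)) w = riemannZeta (w - 1) / riemannZeta w := by
  have h1w : 1 < w.re := by linarith
  have hφ : LSeriesSummable (fun n : ℕ ↦ (Nat.totient n : ℂ)) w := by
    refine LSeriesSummable_of_le_const_mul_rpow hw ⟨1, fun n hn ↦ ?_⟩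
    have h1 : ((Nat.totient n : ℝ)) ≤ (n : ℝ) := Nat.cast_le.mpr (Nat.totient_le n)
    rw [show ((2:ℝ) - 1) = 1 by norm_num, Real.rpow_one]
    simpa using h1
  have h1 : LSeriesSummable (fun _ : ℕ ↦ (1 : ℂ)) w :=
    LSeriesSummable_one_iff.mpr h1w
  have hconv : (fun n : ℕ ↦ (Nat.totient n : ℂ)) ⍟ (fun _ : ℕ ↦ (1 : ℂ))
      = fun n : ℕ ↦ (n : ℂ) := by
    funext n
    rw [LSeries.convolution_def]
    simp only [mul_one]
    rw [Nat.sum_divisorsAntidiagonal (f := fun x _ ↦ (Nat.totient x : ℂ))]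
    rw [← Nat.cast_sum, Nat.sum_totient]
  have hmul := LSeries_convolution' hφ h1
  rw [hconv] at hmul
  have hLid : LSeries (fun n : ℕ ↦ (n : ℂ)) w = riemannZeta (w - 1) := by
    have hw1 : 1 < (w - 1).re := by simp [Complex.sub_re]; linarith
    rw [zeta_eq_tsum_one_div_nat_cpow hw1, LSeries]
    refine tsum_congr fun n ↦ ?_
    rcases eq_or_ne n 0 with rfl | hn
    · have : (w - 1) ≠ 0 := fun h ↦ by rw [h] at hw1; norm_num at hw1
      simp [LSeries.term_zero, zero_cpow this]
    · rw [LSeries.term_of_ne_zero hn]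
      have hn' : (n : ℂ) ≠ 0 := Nat.cast_ne_zero.mpr hn
      rw [show w = (w - 1) + 1 by ring, cpow_add _ _ hn', cpow_one]
      rw [mul_comm, ← div_div, div_self hn', show (w-1)+1-1 = w-1 by ring]
  have hL1 : LSeries (fun _ : ℕ ↦ (1 : ℂ)) w = riemannZeta w :=
    LSeries_one_eq_riemannZeta h1w
  rw [hLid, hL1] at hmul
  rw [eq_div_iff (riemannZeta_ne_zero_of_one_lt_re h1w)]
  exact hmul.symm

/-- The totient Dirichlet series as a sum over positive naturals. -/
lemma tsum_pnat_totient {w : ℂ} (hw : 2 < w.re) :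
    ∑' c : ℕ+, (Nat.totient (c : ℕ) : ℂ) * ((c : ℕ) : ℂ) ^ (-w)
      = riemannZeta (w - 1) / riemannZeta w := by
  rw [← LSeries_totient_eq hw, LSeries]
  have hinj : Function.Injective (fun c : ℕ+ ↦ (c : ℕ)) := fun a b h ↦ PNat.coe_injective h
  rw [← Function.Injective.tsum_eq hinj (f := LSeries.term (fun n : ℕ ↦ (Nat.totient n : ℂ)) w)
    (fun x hx ↦ ?_)]
  · refine tsum_congr fun c ↦ ?_
    rw [LSeries.term_of_ne_zero c.pos.ne', cpow_neg, div_eq_mul_inv]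
  · rcases eq_or_ne x 0 with rfl | h
    · simp [Function.support] at hx
    · exact ⟨⟨x, Nat.pos_of_ne_zero h⟩, rfl⟩

/-- Closed form for the product of the two relevant Fourier coefficients. -/
lemma aCoeff_prod (n : ℕ) (z1 z2 s : ℂ) (hz1 : 0 < z1.im) (hz2 : 0 < z2.im) :
    aCoeff 0 (2 * s - (n : ℂ)) z2 * aCoeff (2 * n) (2 * s) z1 =
      (-1 : ℂ) ^ n * (Real.pi : ℂ) ^ 2 * Complex.Gamma (4 * s - 2 * (n : ℂ) - 1) ^ 2 /
        ((4 : ℂ) ^ (4 * s - 2 * (n : ℂ) - 1) * Complex.Gamma (2 * s - 2 * (n : ℂ)) *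
          Complex.Gamma (2 * s - (n : ℂ)) ^ 2 * Complex.Gamma (2 * s)) *
      ((z1.im * z2.im : ℝ) : ℂ) ^ (1 + 2 * (n : ℂ) - 4 * s) := by
  have e1 : 1 + ((0 : ℕ) : ℂ) - 2 * (2 * s - (n : ℂ)) = 1 + 2 * (n : ℂ) - 4 * s := by
    push_cast; ring
  have e2 : 2 * (2 * s - (n : ℂ)) - ((0 : ℕ) : ℂ) - 1 = 4 * s - 2 * (n : ℂ) - 1 := by
    push_cast; ring
  have e3 : 1 + ((2 * n : ℕ) : ℂ) - 2 * (2 * s) = 1 + 2 * (n : ℂ) - 4 * s := by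
    push_cast; ring
  have e4 : 2 * (2 * s) - ((2 * n : ℕ) : ℂ) - 1 = 4 * s - 2 * (n : ℂ) - 1 := by
    push_cast; ring
  have e5 : 2 * s - (n : ℂ) - ((0 : ℕ) : ℂ) = 2 * s - (n : ℂ) := by push_cast; ring
  have e6 : 2 * s - ((2 * n : ℕ) : ℂ) = 2 * s - 2 * (n : ℂ) := by push_cast; ring
  have hI : Complex.I ^ (2 * n) = (-1 : ℂ) ^ n := by
    rw [pow_mul, Complex.I_sq]
  set E : ℂ := 1 + 2 * (n : ℂ) - 4 * s with hE
  have h2 : (2 : ℂ) ^ E * (2 : ℂ) ^ E = ((4 : ℂ) ^ (4 * s - 2 * (n : ℂ) - 1))⁻¹ := by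
    rw [show (2 : ℂ) = ((2 : ℝ) : ℂ) by norm_num,
      ← Complex.mul_cpow_ofReal_nonneg (by norm_num) (by norm_num)]
    rw [show ((2 : ℝ) : ℂ) * ((2 : ℝ) : ℂ) = (4 : ℂ) by norm_num]
    rw [show E = -(4 * s - 2 * (n : ℂ) - 1) by rw [hE]; ring, Complex.cpow_neg]
    norm_num
  have hy : (z2.im : ℂ) ^ E * (z1.im : ℂ) ^ E = ((z1.im * z2.im : ℝ) : ℂ) ^ E := by
    rw [Complex.ofReal_mul, Complex.mul_cpow_ofReal_nonneg hz1.le hz2.le, mul_comm]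
  have hi : ((-1 : ℂ) ^ n)⁻¹ = (-1 : ℂ) ^ n := by
    rw [← inv_pow]; norm_num
  simp only [aCoeff, e1, e2, e3, e4, e5, e6, hI, pow_zero, one_mul]
  calc (2 : ℂ) ^ E * (Real.pi : ℂ) * Complex.Gamma (4 * s - 2 * (n : ℂ) - 1) /
        (Complex.Gamma (2 * s - (n : ℂ)) * Complex.Gamma (2 * s - (n : ℂ))) * (z2.im : ℂ) ^ E *
        ((2 : ℂ) ^ E * (Real.pi : ℂ) * Complex.Gamma (4 * s - 2 * (n : ℂ) - 1) /
        ((-1 : ℂ) ^ n * Complex.Gamma (2 * s) * Complex.Gamma (2 * s - 2 * (n : ℂ))) *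
        (z1.im : ℂ) ^ E)
      = ((2 : ℂ) ^ E * (2 : ℂ) ^ E) * ((z2.im : ℂ) ^ E * (z1.im : ℂ) ^ E) *
        (((-1 : ℂ) ^ n)⁻¹) * ((Real.pi : ℂ) ^ 2 * Complex.Gamma (4 * s - 2 * (n : ℂ) - 1) ^ 2) /
        (Complex.Gamma (2 * s - (n : ℂ)) ^ 2 * Complex.Gamma (2 * s) *
          Complex.Gamma (2 * s - 2 * (n : ℂ))) := by ring
    _ = (-1 : ℂ) ^ n * (Real.pi : ℂ) ^ 2 * Complex.Gamma (4 * s - 2 * (n : ℂ) - 1) ^ 2 /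
        ((4 : ℂ) ^ (4 * s - 2 * (n : ℂ) - 1) * Complex.Gamma (2 * s - 2 * (n : ℂ)) *
          Complex.Gamma (2 * s - (n : ℂ)) ^ 2 * Complex.Gamma (2 * s)) *
        ((z1.im * z2.im : ℝ) : ℂ) ^ E := by
        rw [h2, hy, hi]; ring

/-- The entire function extending `(s-1) ζ(s)`. -/
def zetaE : ℂ → ℂ := Function.update (fun s : ℂ ↦ (s - 1) * riemannZeta s) 1 1

lemma zetaE_diff : Differentiable ℂ zetaE := by
  intro s
  have hdiff : ∀ t : ℂ, t ≠ 1 → DifferentiableAt ℂ zetaE t := by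
    intro t ht
    have h1 : DifferentiableAt ℂ (fun u : ℂ ↦ (u - 1) * riemannZeta u) t :=
      ((differentiableAt_id.sub_const 1)).mul (differentiableAt_riemannZeta ht)
    refine h1.congr_of_eventuallyEq ?_
    filter_upwards [isOpen_ne.mem_nhds ht] with u hu
    rw [zetaE, Function.update_of_ne hu]
  rcases ne_or_eq s 1 with hs | rfl
  · exact hdiff s hs
  · refine (analyticAt_of_differentiable_on_punctured_nhds_of_continuousAt ?_
      ?_).differentiableAt
    · filter_upwards [self_mem_nhdsWithin] with t ht
      exact hdiff t ht
    · simpa only [zetaE, continuousAt_update_same] using riemannZeta_residue_one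

lemma zetaE_apply {t : ℂ} (ht : t ≠ 1) : zetaE t = (t - 1) * riemannZeta t := by
  rw [zetaE, Function.update_of_ne ht]

/-- Holomorphic extension of `rhsConstantTerm 1 z1 z2` past `s = 1`. -/
def FExt (z1 z2 : ℂ) : ℂ → ℂ := fun w ↦
  (-1 : ℂ) * (Real.pi : ℂ) ^ 2 * Complex.Gamma (4 * w - 3) ^ 2 *
    ((Complex.Gamma (2 * w - 1))⁻¹) ^ 3 * (Complex.Gamma (2 * w))⁻¹ *
    (zetaE (4 * w - 3) / 2) / ((4 : ℂ) ^ (4 * w - 3) * riemannZeta (4 * w - 2)) *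
    ((z1.im * z2.im : ℝ) : ℂ) ^ (3 - 4 * w)

lemma re44' (w : ℂ) : (4 * w - 3).re = 4 * w.re - 3 := by
  simp [Complex.sub_re, Complex.mul_re]

lemma re42' (w : ℂ) : (4 * w - 2).re = 4 * w.re - 2 := by
  simp [Complex.sub_re, Complex.mul_re]

lemma re21' (w : ℂ) : (2 * w - 1).re = 2 * w.re - 1 := by
  simp [Complex.sub_re, Complex.mul_re]

lemma re22' (w : ℂ) : (2 * w - 2).re = 2 * w.re - 2 := by
  simp [Complex.sub_re, Complex.mul_re]

lemma FExt_diff (z1 z2 : ℂ) (hz1 : 0 < z1.im) (hz2 : 0 < z2.im) :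
    DifferentiableOn ℂ (FExt z1 z2) {w : ℂ | 3 / 4 < w.re} := by
  intro w hw
  simp only [Set.mem_setOf_eq] at hw
  apply DifferentiableAt.differentiableWithinAt
  have hYne : ((z1.im * z2.im : ℝ) : ℂ) ≠ 0 := by
    simp only [ne_eq, Complex.ofReal_eq_zero]
    positivity
  have h4ne : ((4 : ℂ) ^ (4 * w - 3)) ≠ 0 := by
    rw [Complex.cpow_def_of_ne_zero (by norm_num)]
    exact Complex.exp_ne_zero _
  have hzne : riemannZeta (4 * w - 2) ≠ 0 := by
    refine riemannZeta_ne_zero_of_one_lt_re ?_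
    rw [re42']; linarith
  have hGamma : DifferentiableAt ℂ (fun w : ℂ ↦ Complex.Gamma (4 * w - 3)) w := by
    refine (Complex.differentiableAt_Gamma _ fun m ↦ ?_).comp w
      ((differentiableAt_id.const_mul _).sub_const 3)
    intro h
    have := congrArg Complex.re h
    rw [re44'] at this
    simp only [Complex.neg_re, Complex.natCast_re] at this
    have hm : (0 : ℝ) ≤ m := Nat.cast_nonneg m
    linarith
  have hZdiff : DifferentiableAt ℂ (fun w : ℂ ↦ riemannZeta (4 * w - 2)) w := by
    refine (differentiableAt_riemannZeta ?_).comp w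
      ((differentiableAt_id.const_mul _).sub_const 2)
    intro h
    have := congrArg Complex.re h
    rw [re42'] at this
    simp only [Complex.one_re] at this
    linarith
  refine DifferentiableAt.mul ?_ ?_
  · refine DifferentiableAt.div ?_ ?_ (mul_ne_zero h4ne hzne)
    · refine (((((differentiableAt_const _).mul (hGamma.pow 2)).mul ?_).mul ?_).mul ?_)
      · exact ((Complex.differentiable_one_div_Gamma.comp
          ((differentiable_id.const_mul _).sub_const 1)) w).pow 3
      · exact (Complex.differentiable_one_div_Gamma.comp (differentiable_id.const_mul _)) w
      · exact ((zetaE_diff.comp ((differentiable_id.const_mul _).sub_const 3)) w).div_const 2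
    · exact (((differentiableAt_id.const_mul _).sub_const 3).const_cpow
        (Or.inl (by norm_num))).mul hZdiff
  · exact (differentiableAt_id.const_mul _).neg.const_add 3 |>.const_cpow (Or.inl hYne)

lemma FExt_eq (z1 z2 : ℂ) {w : ℂ} (hw : 1 < w.re) :
    FExt z1 z2 w = rhsConstantTerm 1 z1 z2 w := by
  have h1 : (2 * w - 2 : ℂ) ≠ 0 := by
    intro h
    have := congrArg Complex.re h
    rw [re22'] at this
    simp only [Complex.zero_re] at this
    linarith
  have hG2 : Complex.Gamma (2 * w - 2) ≠ 0 :=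
    Complex.Gamma_ne_zero_of_re_pos (by rw [re22']; linarith)
  have hG1 : Complex.Gamma (2 * w - 1) ≠ 0 :=
    Complex.Gamma_ne_zero_of_re_pos (by rw [re21']; linarith)
  have hG0 : Complex.Gamma (2 * w) ≠ 0 :=
    Complex.Gamma_ne_zero_of_re_pos (by simp [Complex.mul_re]; linarith)
  have hzne : riemannZeta (4 * w - 2) ≠ 0 :=
    riemannZeta_ne_zero_of_one_lt_re (by rw [re42']; linarith)
  have h43 : (4 * w - 3 : ℂ) ≠ 1 := by
    intro h
    have := congrArg Complex.re h
    rw [re44'] at this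
    simp only [Complex.one_re] at this
    linarith
  have hzE : zetaE (4 * w - 3) = (4 * w - 4) * riemannZeta (4 * w - 3) := by
    rw [zetaE_apply h43]
    ring_nf
  have hGam : Complex.Gamma (2 * w - 1) = (2 * w - 2) * Complex.Gamma (2 * w - 2) := by
    have := Complex.Gamma_add_one (2 * w - 2) h1
    rw [show (2 * w - 2 + 1 : ℂ) = 2 * w - 1 by ring] at this
    exact this
  rw [rhsConstantTerm, FExt]
  rw [show ((1 : ℕ) : ℂ) = 1 by norm_num]
  rw [show (4 * w - 2 * 1 - 1 : ℂ) = 4 * w - 3 by ring,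
    show (2 * w - 2 * 1 : ℂ) = 2 * w - 2 by ring,
    show (4 * w - 2 * 1 : ℂ) = 4 * w - 2 by ring,
    show (1 + 2 * 1 - 4 * w : ℂ) = 3 - 4 * w by ring,
    show (2 * w - 1 : ℂ) = 2 * w - 2 + 1 by ring]
  rw [show (2 * w - 2 + 1 : ℂ) = 2 * w - 1 by ring, hzE, pow_one]
  have hGam'' : Complex.Gamma (2 * w - 2) = Complex.Gamma (2 * w - 1) * (2 * w - 2)⁻¹ := by
    rw [hGam, mul_comm (2 * w - 2), mul_assoc, mul_inv_cancel₀ h1, mul_one]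
  rw [hGam'']
  have hT : ∀ a b c d e f g y : ℂ, b ≠ 0 →
      (-1) * a ^ 2 * c ^ 2 * (d⁻¹) ^ 3 * e⁻¹ * ((4 * w - 4) * f / 2) / (g * b) * y =
      (-1) * a ^ 2 * c ^ 2 / (g * (d * (2 * w - 2)⁻¹) * d ^ 2 * e) * (f / b) * y := by
    intro a b c d e f g y hb
    have h2w : (2 * w - 2)⁻¹ ≠ 0 := inv_ne_zero h1
    field_simp
    ring
  exact hT _ _ _ _ _ _ _ _ hzne

/-- The constant term `∑_{c>0} φ(c) c^{2n−4s} a₀(2s−n; z₂) a_{2n}(2s; z₁)` of the Fourier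
expansion equals the closed form, and for `n = 1` the closed form extends holomorphically
to a neighborhood of `s = 1`. -/
theorem constant_term_closed_form (n : ℕ) (z1 z2 : ℂ) (hz1 : 0 < z1.im) (hz2 : 0 < z2.im)
    (s : ℂ) (hs : ((n : ℝ) + 1) / 2 < s.re) :
    (∑' c : ℕ+, ((Nat.totient (c : ℕ) : ℂ) * ((c : ℕ) : ℂ) ^ (2 * (n : ℂ) - 4 * s) *
        aCoeff 0 (2 * s - (n : ℂ)) z2 * aCoeff (2 * n) (2 * s) z1)) =
      rhsConstantTerm n z1 z2 s ∧
    (n = 1 → ∃ (U : Set ℂ) (F : ℂ → ℂ), IsOpen U ∧ (1 : ℂ) ∈ U ∧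
      DifferentiableOn ℂ F U ∧
      ∀ w ∈ U, 1 < w.re → F w = rhsConstantTerm 1 z1 z2 w) := by
  constructor
  · set w : ℂ := 4 * s - 2 * (n : ℂ) with hw
    have hwre : 2 < w.re := by
      have hre : w.re = 4 * s.re - 2 * (n : ℝ) := by
        simp [hw, Complex.sub_re, Complex.mul_re]
      rw [hre]
      have := hs
      rw [div_lt_iff₀ (by norm_num : (0:ℝ) < 2)] at this
      linarith
    have hexp : 2 * (n : ℂ) - 4 * s = -w := by rw [hw]; ring
    have hsum : (∑' c : ℕ+, (Nat.totient (c : ℕ) : ℂ) * ((c : ℕ) : ℂ) ^ (2 * (n : ℂ) - 4 * s))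
        = riemannZeta (w - 1) / riemannZeta w := by
      rw [hexp]
      exact tsum_pnat_totient hwre
    calc (∑' c : ℕ+, ((Nat.totient (c : ℕ) : ℂ) * ((c : ℕ) : ℂ) ^ (2 * (n : ℂ) - 4 * s) *
            aCoeff 0 (2 * s - (n : ℂ)) z2 * aCoeff (2 * n) (2 * s) z1))
        = (∑' c : ℕ+, (Nat.totient (c : ℕ) : ℂ) * ((c : ℕ) : ℂ) ^ (2 * (n : ℂ) - 4 * s)) *
            aCoeff 0 (2 * s - (n : ℂ)) z2 * aCoeff (2 * n) (2 * s) z1 := by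
          rw [tsum_mul_right, tsum_mul_right]
      _ = riemannZeta (w - 1) / riemannZeta w *
            (aCoeff 0 (2 * s - (n : ℂ)) z2 * aCoeff (2 * n) (2 * s) z1) := by
          rw [hsum, mul_assoc]
      _ = rhsConstantTerm n z1 z2 s := by
          rw [aCoeff_prod n z1 z2 s hz1 hz2, rhsConstantTerm]
          rw [show w - 1 = 4 * s - 2 * (n : ℂ) - 1 by rw [hw], hw]
          ring
  · intro _
    refine ⟨{w : ℂ | 3 / 4 < w.re}, FExt z1 z2, ?_, ?_, FExt_diff z1 z2 hz1 hz2, ?_⟩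
    · exact isOpen_lt continuous_const Complex.continuous_re
    · norm_num [Set.mem_setOf_eq, Complex.one_re]
    · intro w _ hwre
      exact FExt_eq z1 z2 hwre
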